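/- If at some time instant more than k tasks are active on a set of positive measure, then no assignment of k single-interval-at-a-time flight plans achieves full coverage: any assignment P of k plans, where the intervals of each plan are pairwise disjoint, satisfies FT(P) < Σ_i |T_i|. -/

import Mathlib

/-!
Since the intervals of a plan are pairwise disjoint, a plan films at most one task at each
instant, so at every time at most `k` tasks are filmed, while on `S` at least `k + 1` tasks are
active. Both the filming time and the total task time are integrals over time of the number of
tasks filmed, resp. active, at that time. The first integrand is pointwise at most the second and
strictly smaller on `S`, which has positive measure; as the task lengths are finite, the
inequality between the integrals is strict.
-/

open MeasureTheory Finset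
open scoped Classical ENNReal

section CountingFunction

variable {α ι : Type*} [Fintype ι]

theorem card_filter_mem_eq_sum_indicator (A : ι → Set α) (t : α) :
    (#{i | t ∈ A i} : ℝ≥0∞) = ∑ i, (A i).indicator 1 t := by
  rw [card_filter]
  push_cast
  simp [Set.indicator_apply]

theorem measurable_card_filter_mem [MeasurableSpace α] {A : ι → Set α}
    (hA : ∀ i, MeasurableSet (A i)) :
    Measurable fun t => (#{i | t ∈ A i} : ℝ≥0∞) := by
  simp_rw [card_filter_mem_eq_sum_indicator]
  exact Finset.measurable_sum _ fun i _ => measurable_one.indicator (hA i)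

theorem lintegral_card_filter_mem [MeasurableSpace α] (μ : Measure α) {A : ι → Set α}
    (hA : ∀ i, MeasurableSet (A i)) :
    ∫⁻ t, (#{i | t ∈ A i} : ℝ≥0∞) ∂μ = ∑ i, μ (A i) := by
  simp_rw [card_filter_mem_eq_sum_indicator]
  rw [lintegral_finsetSum _ fun i _ => measurable_one.indicator (hA i)]
  simp_rw [lintegral_indicator_one (hA _)]

end CountingFunction

namespace FlightPlan

variable {α ι κ : Type*} [DecidableEq ι]

def coverage (P : κ → Finset (Set α × ι)) (i : ι) : Set α :=
  ⋃ j, ⋃ q ∈ (P j).filter (fun q => q.2 = i), q.1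

theorem mem_coverage {P : κ → Finset (Set α × ι)} {i : ι} {t : α} :
    t ∈ coverage P i ↔ ∃ j, ∃ q ∈ P j, q.2 = i ∧ t ∈ q.1 := by
  simp [coverage, and_assoc]

theorem coverage_subset {P : κ → Finset (Set α × ι)} {T : ι → Set α}
    (hP : ∀ j, ∀ q ∈ P j, q.1 ⊆ T q.2) (i : ι) : coverage P i ⊆ T i := by
  intro t ht
  obtain ⟨j, q, hq, rfl, htq⟩ := mem_coverage.1 ht
  exact hP j q hq htq

theorem measurableSet_coverage [MeasurableSpace α] [Countable κ] {P : κ → Finset (Set α × ι)}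
    (hP : ∀ j, ∀ q ∈ P j, MeasurableSet q.1) (i : ι) : MeasurableSet (coverage P i) :=
  MeasurableSet.iUnion fun j =>
    ((P j).filter _).measurableSet_biUnion fun q hq => hP j q (mem_filter.1 hq).1

theorem card_filter_mem_le_one_of_pairwise_disjoint {p : Finset (Set α × ι)}
    (hp : Set.Pairwise (↑p : Set (Set α × ι)) fun a b => Disjoint a.1 b.1) (t : α) :
    #(p.filter fun q => t ∈ q.1) ≤ 1 := by
  refine card_le_one.2 fun a ha b hb => ?_
  rw [mem_filter] at ha hb
  by_contra hab
  exact Set.disjoint_left.1 (hp ha.1 hb.1 hab) ha.2 hb.2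

theorem card_filter_mem_coverage_le [Fintype ι] [Fintype κ] {P : κ → Finset (Set α × ι)}
    (hP : ∀ j, Set.Pairwise (↑(P j) : Set (Set α × ι)) fun a b => Disjoint a.1 b.1) (t : α) :
    #{i | t ∈ coverage P i} ≤ Fintype.card κ := by
  have hfilmed : ({i | t ∈ coverage P i} : Finset ι) ⊆
      univ.biUnion fun j => ((P j).filter fun q => t ∈ q.1).image Prod.snd := by
    intro i hi
    obtain ⟨j, q, hq, rfl, htq⟩ := mem_coverage.1 (mem_filter.1 hi).2
    exact mem_biUnion.2 ⟨j, mem_univ j, mem_image_of_mem _ (mem_filter.2 ⟨hq, htq⟩)⟩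
  calc #{i | t ∈ coverage P i}
      ≤ ∑ j, #(((P j).filter fun q => t ∈ q.1).image Prod.snd) :=
        (card_le_card hfilmed).trans card_biUnion_le
    _ ≤ ∑ _j : κ, 1 :=
        sum_le_sum fun j _ =>
          card_image_le.trans (card_filter_mem_le_one_of_pairwise_disjoint (hP j) t)
    _ = Fintype.card κ := by simp

end FlightPlan

open FlightPlan in
theorem no_full_coverage_when_overloaded_general {n k : ℕ} (T : Fin n → Set ℝ)
    (hT : ∀ i, MeasurableSet (T i))
    (hTfin : ∀ i, volume (T i) < ⊤)
    (P : Fin k → Finset (Set ℝ × Fin n))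
    (hI : ∀ j, ∀ q ∈ P j, MeasurableSet q.1 ∧ q.1 ⊆ T q.2)
    (hdisj : ∀ j, Set.Pairwise (↑(P j) : Set (Set ℝ × Fin n))
        fun a b => Disjoint a.1 b.1)
    (S : Set ℝ) (hSpos : 0 < volume S)
    (hact : ∀ t ∈ S, k + 1 ≤ (Finset.univ.filter fun i => t ∈ T i).card) :
    ∑ i, volume (⋃ j, ⋃ q ∈ (P j).filter (fun q => q.2 = i), q.1) <
      ∑ i, volume (T i) := by
  have hCT := coverage_subset fun j q hq => (hI j q hq).2
  have hC := measurableSet_coverage fun j q hq => (hI j q hq).1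
  change ∑ i, volume (coverage P i) < _
  rw [← lintegral_card_filter_mem volume hC, ← lintegral_card_filter_mem volume hT]
  refine lintegral_strict_mono_of_ae_le_of_ae_lt_on (measurable_card_filter_mem hT).aemeasurable
    ?_ (ae_of_all _ fun t => ?_) hSpos.ne' (ae_of_all _ fun t ht => ?_)
  · rw [lintegral_card_filter_mem volume hC]
    exact ((sum_le_sum fun i _ => measure_mono (hCT i)).trans_lt
      (ENNReal.sum_lt_top.2 fun i _ => hTfin i)).ne
  · exact Nat.cast_le.2 (card_le_card (monotone_filter_right _ fun i _ h => hCT i h))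
  · have hfilmed := card_filter_mem_coverage_le hdisj t
    have hactive := hact t ht
    rw [Fintype.card_fin] at hfilmed
    exact Nat.cast_lt.2 (by omega)

/-- If at some time instants forming a set of positive measure more than `k`
tasks are active, then no assignment of `k` flight plans, each filming one
task at a time (pairwise disjoint intervals within a plan), achieves full
coverage: the filming time is strictly less than the total task time. -/
theorem no_full_coverage_when_overloaded {n k : ℕ} (T : Fin n → Set ℝ)
    (hT : ∀ i, MeasurableSet (T i))
    (hTfin : ∀ i, volume (T i) < ⊤)
    (P : Fin k → Finset (Set ℝ × Fin n))
    (hI : ∀ j, ∀ q ∈ P j, MeasurableSet q.1 ∧ q.1 ⊆ T q.2)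
    (hdisj : ∀ j, Set.Pairwise (↑(P j) : Set (Set ℝ × Fin n))
        fun a b => Disjoint a.1 b.1)
    (S : Set ℝ) (hS : MeasurableSet S) (hSpos : 0 < volume S)
    (hact : ∀ t ∈ S, k + 1 ≤ (Finset.univ.filter fun i => t ∈ T i).card) :
    ∑ i, volume (⋃ j, ⋃ q ∈ (P j).filter (fun q => q.2 = i), q.1) <
      ∑ i, volume (T i) :=
  no_full_coverage_when_overloaded_general T hT hTfin P hI hdisj S hSpos hact
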